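/- With κ the hexagonal morphism and K_t = π(κ^t(1̄)), for every i with 0 ≤ i < 3^{t-1} - 1, the middle terms of consecutive κ-blocks differ: K_t(3i+2) ≠ K_t(3(i+1)+2). Moreover, the middle term of the block π(κ(x)) equals π(x) + 1 (mod 3, with values in {1,2,3}). -/

import Mathlib

/-- The hexagonal morphism `κ` on the auxiliary alphabet `{1̄,1̲,2̄,2̲,3̄,3̲}`,
encoded as `Fin 6` via `0=1̄, 1=1̲, 2=2̄, 3=2̲, 4=3̄, 5=3̲`:
`κ(1̄)=1̄2̲3̄, κ(2̄)=2̄3̲1̄, κ(3̄)=3̄1̲2̄, κ(1̲)=3̲2̄1̲, κ(2̲)=1̲3̄2̲, κ(3̲)=2̲1̄3̲`. -/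
def hexKappa : Fin 6 → List (Fin 6) :=
  ![[0, 3, 4], [5, 2, 1], [2, 5, 0], [1, 4, 3], [4, 1, 2], [3, 0, 5]]

/-- The projection `π` sending both `ā` and `a̲` to `a`, with `{1,2,3}` encoded as `Fin 3`
via `0=1, 1=2, 2=3`. -/
def hexPi : Fin 6 → Fin 3 := ![0, 0, 1, 1, 2, 2]

/-- The `t`-fold iterate `κ^t(1̄)` as a word over the auxiliary alphabet. -/
def hexIter : ℕ → List (Fin 6)
  | 0 => [0]
  | t + 1 => (hexIter t).flatMap hexKappa

/-- The sequence `K_t = π(κ^t(1̄))`. -/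
def hexK (t : ℕ) : List (Fin 3) := (hexIter t).map hexPi

/-!
The middle letter of `π(κ(x))` is `π(x) + 1`, so the middle terms of the `i`-th and `(i+1)`-st
`κ`-blocks of `K_{t+1}` are `K_t(i) + 1` and `K_t(i+1) + 1`, and it suffices that adjacent
letters of `K_t` differ. This follows from a finer invariant of `κ^t(1̄)`, `HexAdj` below,
checked on the six images of `κ` and on the junctions between consecutive images.
-/

namespace List

variable {α β : Type*}

theorem length_flatMap_of_length_eq {f : α → List β} {n : ℕ} (hf : ∀ a, (f a).length = n)
    (l : List α) : (l.flatMap f).length = n * l.length := by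
  simp [length_flatMap, hf, mul_comm]

theorem getElem?_flatMap_of_length_eq {f : α → List β} {n : ℕ} (hf : ∀ a, (f a).length = n)
    (l : List α) (i : ℕ) {j : ℕ} (hj : j < n) :
    (l.flatMap f)[n * i + j]? = l[i]?.bind fun a => (f a)[j]? := by
  induction l generalizing i with
  | nil => simp
  | cons a l ih =>
    cases i with
    | zero => simp [getElem?_append_left, hf, hj]
    | succ i =>
      rw [flatMap_cons, getElem?_append_right (by rw [hf]; nlinarith), hf,
        show n * (i + 1) + j - n = n * i + j by rw [mul_add_one]; omega, ih]
      rfl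

theorem IsChain.flatMap {R : α → α → Prop} {S : β → β → Prop} {f : α → List β} {l : List α}
    (hl : l.IsChain R) (hne : ∀ a, f a ≠ []) (hf : ∀ a, (f a).IsChain S)
    (hRS : ∀ a b, R a b → ∀ x ∈ (f a).getLast?, ∀ y ∈ (f b).head?, S x y) :
    (l.flatMap f).IsChain S := by
  rw [flatMap_def, isChain_flatten (by simpa using fun a _ => (hne a).symm)]
  exact ⟨by simpa using fun a _ => hf a, (isChain_map f).2 (hl.imp fun a b => hRS a b)⟩

end List

/-- Overlined letters have even codes and underlined ones odd codes: adjacent letters of `κ^t(1̄)`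
alternate decorations and have distinct projections. -/
def HexAdj (x y : Fin 6) : Prop := x.val % 2 ≠ y.val % 2 ∧ hexPi x ≠ hexPi y

instance : DecidableRel HexAdj := fun x y => by unfold HexAdj; infer_instance

theorem length_hexKappa (x : Fin 6) : (hexKappa x).length = 3 := by fin_cases x <;> rfl

theorem isChain_hexKappa (x : Fin 6) : (hexKappa x).IsChain HexAdj := by revert x; decide

theorem hexAdj_getLast?_hexKappa_head? :
    ∀ a b, HexAdj a b → ∀ x ∈ (hexKappa a).getLast?, ∀ y ∈ (hexKappa b).head?, HexAdj x y := by
  decide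

theorem isChain_hexIter (t : ℕ) : (hexIter t).IsChain HexAdj := by
  induction t with
  | zero => exact List.isChain_singleton 0
  | succ t ih =>
    exact ih.flatMap (fun x => List.ne_nil_of_length_pos (by simp [length_hexKappa]))
      isChain_hexKappa hexAdj_getLast?_hexKappa_head?

theorem length_hexIter (t : ℕ) : (hexIter t).length = 3 ^ t := by
  induction t with
  | zero => rfl
  | succ t ih =>
    rw [hexIter, List.length_flatMap_of_length_eq length_hexKappa, ih, pow_succ, mul_comm]

theorem length_hexK (t : ℕ) : (hexK t).length = 3 ^ t := by
  rw [hexK, List.length_map, length_hexIter]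

theorem getElem?_map_hexPi_hexKappa_one (x : Fin 6) :
    ((hexKappa x).map hexPi)[1]? = some (hexPi x + 1) := by
  revert x; decide

theorem getElem?_hexK_succ_middle (t i : ℕ) :
    (hexK (t + 1))[3 * i + 1]? = (hexK t)[i]?.map (· + 1) := by
  rw [hexK, hexIter, List.map_flatMap,
    List.getElem?_flatMap_of_length_eq (by simp [length_hexKappa]) _ _ (by norm_num : 1 < 3),
    hexK, List.getElem?_map]
  cases (hexIter t)[i]? with
  | none => rfl
  | some x => exact getElem?_map_hexPi_hexKappa_one x

theorem isChain_ne_hexK (t : ℕ) : (hexK t).IsChain (· ≠ ·) :=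
  (List.isChain_map hexPi).2 ((isChain_hexIter t).imp fun _ _ h => h.2)

/-- Middle terms of consecutive `κ`-blocks of `K_t` differ, and the middle term of
`π(κ(x))` equals `π(x) + 1` (mod 3, in the cyclic order of `{1,2,3}` encoded as `Fin 3`). -/
theorem hexK_middle (t : ℕ) :
    (∀ i < 3 ^ (t - 1) - 1,
        (hexK t).getD (3 * i + 1) 0 ≠ (hexK t).getD (3 * (i + 1) + 1) 0) ∧
      ∀ x : Fin 6, ((hexKappa x).map hexPi).getD 1 0 = hexPi x + 1 := by
  refine ⟨fun i hi => ?_, fun x => ?_⟩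
  · obtain _ | t := t
    · simp at hi
    have hi' : i + 1 < (hexK t).length := by
      rw [Nat.add_sub_cancel] at hi
      rw [length_hexK]
      omega
    rw [List.getD_eq_getElem?_getD, List.getD_eq_getElem?_getD, getElem?_hexK_succ_middle,
      getElem?_hexK_succ_middle, List.getElem?_eq_getElem hi', List.getElem?_eq_getElem (by omega)]
    simpa using List.isChain_iff_getElem.1 (isChain_ne_hexK t) i hi'
  · rw [List.getD_eq_getElem?_getD, getElem?_map_hexPi_hexKappa_one, Option.getD_some]
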